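/- For all n > 24, s > 0, L > 9, and m = L n, one has P{ ∑_{i=1}^n v_i·k_i(x) ≤ L n ‖v‖ ‖p‖ √(1 + (3 + 6s)/√L + 5s²/L) + 1 } ≥ 1 − (10/9) e^{−s²/4}, where x ∈ U^m is drawn from the product measure; in particular, since the average search time AST(v,x) is at most ∑_{i=1}^n v_i·k_i(x), the same probabilistic upper bound holds for AST(v,x). -/

import Mathlib

/-- Number of keys of the sequence `x` (counted with multiplicity) hashed into slot `i`. -/
def kcount {U : Type*} [Fintype U] {n m : ℕ} (h : U → Fin n) (x : Fin m → U) (i : Fin n) : ℕ :=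
  (Finset.univ.filter (fun j => h (x j) = i)).card

/-- Probability of a set `S` of key sequences, under the product measure induced by
the probability mass function `q` on the key space `U`. -/
noncomputable def Pr {U : Type*} [Fintype U] {m : ℕ} (q : U → ℝ) (S : Set (Fin m → U)) : ℝ :=
  ∑ x : Fin m → U, S.indicator (fun y => ∏ j, q (y j)) x

/-- The empirical collision probability `∑ i, k_i(x)(k_i(x) − 1) / (m(m−1))`
of a sequence `x` of `m` keys. -/
noncomputable def collEst {U : Type*} [Fintype U] {n m : ℕ} (h : U → Fin n)
    (x : Fin m → U) : ℝ :=
  ∑ i : Fin n, (kcount h x i : ℝ) * ((kcount h x i : ℝ) - 1) / ((m : ℝ) * ((m : ℝ) - 1))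

/-!
`X = ∑ i, v i * k_i(x) = ∑ j, v (h (x j))` is a sum of `m` independent terms with values in
`[0, ‖v‖]` and mean at most `‖v‖ ‖p‖` (Cauchy–Schwarz). Convexity, `e^{θν} ≤ 1 + θ (e^ν - 1)` for
`θ ∈ [0, 1]`, gives the Chernoff bound `P(X > t) ≤ exp (m ‖p‖ (e^ν - 1) - ν t / ‖v‖)`. With
`R = √(1 + (3 + 6s)/√L + 5s²/L)`, `t = m ‖v‖ ‖p‖ R + 1` and `ν = min (R - 1) 1 / 2`, the exponent
is at most `-s²/4` as soon as `m ‖p‖ ≥ L R`. Since `n ‖p‖² ≥ 1`, this holds unless `‖p‖ R ≥ 1`,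
and then `X ≤ m ‖v‖ ≤ t` for every `x`.
-/

open Finset Real

section ProductMeasure

variable {U : Type*} [Fintype U] {m : ℕ} {q : U → ℝ}

theorem sum_prod_apply_eq_pow (f : U → ℝ) : ∑ x : Fin m → U, ∏ j, f (x j) = (∑ u, f u) ^ m := by
  classical
  rw [← Fintype.prod_sum (fun (_ : Fin m) u => f u), prod_const, card_univ, Fintype.card_fin]

theorem Pr_add_Pr_compl (hq1 : ∑ u, q u = 1) (S : Set (Fin m → U)) : Pr q S + Pr q Sᶜ = 1 := by
  simp only [Pr, ← sum_add_distrib, Set.indicator_self_add_compl_apply, sum_prod_apply_eq_pow,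
    hq1, one_pow]

theorem Pr_mono (hq0 : ∀ u, 0 ≤ q u) {S T : Set (Fin m → U)} (hST : S ⊆ T) : Pr q S ≤ Pr q T :=
  sum_le_sum fun x _ =>
    Set.indicator_le_indicator_of_subset hST (fun y => prod_nonneg fun j _ => hq0 (y j)) x

theorem Pr_lt_sum_le_exp_mul_pow (hq0 : ∀ u, 0 ≤ q u) (W : U → ℝ) {t l : ℝ} (hl : 0 ≤ l) :
    Pr q {x : Fin m → U | t < ∑ j, W (x j)}
      ≤ exp (-(l * t)) * (∑ u, q u * exp (l * W u)) ^ m := by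
  rw [← sum_prod_apply_eq_pow, mul_sum]
  refine sum_le_sum fun x _ => Set.indicator_apply_le' (fun hx => ?_) (fun _ => ?_)
  · calc ∏ j, q (x j) = 1 * ∏ j, q (x j) := (one_mul _).symm
      _ ≤ exp (l * (∑ j, W (x j) - t)) * ∏ j, q (x j) := by
        gcongr
        · exact prod_nonneg fun j _ => hq0 (x j)
        · exact one_le_exp (mul_nonneg hl (sub_nonneg.2 (le_of_lt hx)))
      _ = exp (-(l * t)) * ∏ j, (q (x j) * exp (l * W (x j))) := by
        rw [prod_mul_distrib, ← exp_sum, ← mul_sum, mul_left_comm, ← exp_add]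
        ring_nf
  · exact mul_nonneg (exp_pos _).le (prod_nonneg fun j _ => mul_nonneg (hq0 _) (exp_pos _).le)

theorem exp_mul_le_one_add_mul_exp_sub_one {θ : ℝ} (h0 : 0 ≤ θ) (h1 : θ ≤ 1) (ν : ℝ) :
    exp (θ * ν) ≤ 1 + θ * (exp ν - 1) := by
  have h := convexOn_exp.2 (Set.mem_univ ν) (Set.mem_univ 0) h0 (sub_nonneg.2 h1)
    (add_sub_cancel θ 1)
  simp only [smul_eq_mul, mul_zero, add_zero, exp_zero] at h
  linarith

theorem sum_mul_exp_le (hq0 : ∀ u, 0 ≤ q u) (hq1 : ∑ u, q u = 1) {W : U → ℝ} {a : ℝ}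
    (ha : 0 < a) (hW0 : ∀ u, 0 ≤ W u) (hWa : ∀ u, W u ≤ a) (ν : ℝ) :
    ∑ u, q u * exp (ν / a * W u) ≤ exp ((∑ u, q u * W u) / a * (exp ν - 1)) :=
  calc ∑ u, q u * exp (ν / a * W u) ≤ ∑ u, q u * (1 + W u / a * (exp ν - 1)) := by
        refine sum_le_sum fun u _ => mul_le_mul_of_nonneg_left ?_ (hq0 u)
        rw [div_mul_comm]
        exact exp_mul_le_one_add_mul_exp_sub_one (div_nonneg (hW0 u) ha.le)
          ((div_le_one ha).2 (hWa u)) ν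
    _ = 1 + (∑ u, q u * W u) / a * (exp ν - 1) := by
        simp only [mul_add, mul_one, sum_add_distrib, hq1, sum_div, sum_mul]
        congr 1
        exact sum_congr rfl fun u _ => by ring
    _ ≤ _ := (add_comm _ _).trans_le (add_one_le_exp _)

theorem Pr_lt_sum_le_exp (hq0 : ∀ u, 0 ≤ q u) (hq1 : ∑ u, q u = 1) {W : U → ℝ} {a β ν t : ℝ}
    (ha : 0 < a) (hW0 : ∀ u, 0 ≤ W u) (hWa : ∀ u, W u ≤ a) (hmean : ∑ u, q u * W u ≤ a * β)
    (hν : 0 ≤ ν) :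
    Pr q {x : Fin m → U | t < ∑ j, W (x j)} ≤ exp (m * β * (exp ν - 1) - ν * t / a) :=
  calc Pr q {x : Fin m → U | t < ∑ j, W (x j)}
      ≤ exp (-(ν / a * t)) * (∑ u, q u * exp (ν / a * W u)) ^ m :=
        Pr_lt_sum_le_exp_mul_pow hq0 W (div_nonneg hν ha.le)
    _ ≤ exp (-(ν / a * t)) * exp ((∑ u, q u * W u) / a * (exp ν - 1)) ^ m := by
        gcongr
        · exact sum_nonneg fun u _ => mul_nonneg (hq0 u) (exp_pos _).le
        · exact sum_mul_exp_le hq0 hq1 ha hW0 hWa ν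
    _ ≤ exp (-(ν / a * t)) * exp (β * (exp ν - 1)) ^ m := by
        gcongr
        · exact sub_nonneg.2 (one_le_exp hν)
        · exact (div_le_iff₀' ha).2 hmean
    _ = exp (m * β * (exp ν - 1) - ν * t / a) := by
        rw [← exp_nat_mul, ← exp_add]
        ring_nf

end ProductMeasure

section Hashing

variable {U : Type*} [Fintype U] {n m : ℕ} (h : U → Fin n)

theorem sum_mul_kcount (v : Fin n → ℝ) (x : Fin m → U) :
    ∑ i, v i * (kcount h x i : ℝ) = ∑ j, v (h (x j)) := by
  simp only [kcount, card_eq_sum_ones, Nat.cast_sum, sum_filter, mul_sum]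
  rw [sum_comm]
  simp

theorem sum_mul_comp_eq_sum_mul {q : U → ℝ} {p : Fin n → ℝ}
    (hp : ∀ i, p i = ∑ u ∈ univ.filter (fun u => h u = i), q u) (v : Fin n → ℝ) :
    ∑ u, q u * v (h u) = ∑ i, p i * v i := by
  simp only [hp, sum_mul]
  rw [← sum_fiberwise univ h (fun u => q u * v (h u))]
  exact sum_congr rfl fun i _ => sum_congr rfl fun u hu => by rw [(mem_filter.1 hu).2]

end Hashing

section Exponent

theorem exists_le_mul_sub_exp_sub_one {R : ℝ} (hR : 1 ≤ R) :
    ∃ ν, 0 ≤ ν ∧ min (R - 1) 1 * (R - 1) / 4 ≤ ν * R - (exp ν - 1) := by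
  set r := min (R - 1) 1
  have hr0 : 0 ≤ r := le_min (by linarith) zero_le_one
  have hr1 : r ≤ 1 := min_le_right _ _
  have hrR : r ≤ R - 1 := min_le_left _ _
  refine ⟨r / 2, by positivity, ?_⟩
  have hexp : exp (r / 2) - 1 - r / 2 ≤ (r / 2) ^ 2 :=
    (abs_le.1 (abs_exp_sub_one_sub_id_le (abs_le.2 ⟨by linarith, by linarith⟩))).2
  nlinarith [mul_le_mul_of_nonneg_left hrR hr0]

theorem sq_le_mul_min_sub_one_mul {s L R : ℝ} (hs : 0 ≤ s) (hL : 0 < L) (hR1 : 1 ≤ R)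
    (hR : R ^ 2 = 1 + (3 + 6 * s) / √L + 5 * s ^ 2 / L) :
    s ^ 2 ≤ L * R * (min (R - 1) 1 * (R - 1)) := by
  have hsL : 0 < √L := sqrt_pos.2 hL
  have hL2 : √L ^ 2 = L := sq_sqrt hL.le
  have hδ : (R - 1) ^ 2 + 2 * (R - 1) = (3 + 6 * s) / √L + 5 * s ^ 2 / L := by
    linear_combination hR
  have h6 : 6 * s ≤ √L * ((R - 1) ^ 2 + 2 * (R - 1)) := by
    rw [hδ, mul_add, mul_div_cancel₀ _ hsL.ne']
    nlinarith [div_nonneg (by positivity : 0 ≤ 5 * s ^ 2) hL.le]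
  have h5 : 5 * s ^ 2 ≤ L * ((R - 1) ^ 2 + 2 * (R - 1)) := by
    rw [hδ, mul_add, mul_div_cancel₀ _ hL.ne']
    nlinarith [div_nonneg (by linarith : 0 ≤ 3 + 6 * s) hsL.le]
  rcases le_total (R - 1) 1 with hr | hr
  · rw [min_eq_left hr]
    have h2s : 2 * s ≤ √L * (R - 1) := by nlinarith
    nlinarith [mul_le_mul h2s h2s (by positivity) (by positivity)]
  · rw [min_eq_right hr]
    nlinarith

theorem exists_le_mul_chernoff_exponent {s L R M : ℝ} (hs : 0 ≤ s) (hL : 0 < L) (hR1 : 1 ≤ R)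
    (hR : R ^ 2 = 1 + (3 + 6 * s) / √L + 5 * s ^ 2 / L) (hM : L * R ≤ M) :
    ∃ ν, 0 ≤ ν ∧ s ^ 2 / 4 ≤ M * (ν * R - (exp ν - 1)) := by
  obtain ⟨ν, hν, hgain⟩ := exists_le_mul_sub_exp_sub_one hR1
  refine ⟨ν, hν, ?_⟩
  have hg0 : 0 ≤ min (R - 1) 1 * (R - 1) :=
    mul_nonneg (le_min (by linarith) zero_le_one) (by linarith)
  calc s ^ 2 / 4 ≤ L * R * (min (R - 1) 1 * (R - 1) / 4) := by
        linarith [sq_le_mul_min_sub_one_mul hs hL hR1 hR]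
    _ ≤ M * (min (R - 1) 1 * (R - 1) / 4) := by gcongr
    _ ≤ M * (ν * R - (exp ν - 1)) := by
        gcongr
        exact (mul_nonneg hL.le (by linarith)).trans hM

end Exponent

theorem one_sub_exp_le_Pr_sum_le {U : Type*} [Fintype U] {m : ℕ} {q : U → ℝ}
    (hq0 : ∀ u, 0 ≤ q u) (hq1 : ∑ u, q u = 1) {W : U → ℝ} {a b s L : ℝ} (ha : 0 < a)
    (hW0 : ∀ u, 0 ≤ W u) (hWa : ∀ u, W u ≤ a) (hmean : ∑ u, q u * W u ≤ a * b) (hb : 0 ≤ b)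
    (hmb : L ≤ m * b ^ 2) (hs : 0 ≤ s) (hL : 0 < L) :
    1 - exp (-s ^ 2 / 4) ≤ Pr q {x : Fin m → U |
      ∑ j, W (x j) ≤ m * a * b * √(1 + (3 + 6 * s) / √L + 5 * s ^ 2 / L) + 1} := by
  set R := √(1 + (3 + 6 * s) / √L + 5 * s ^ 2 / L)
  set B := m * a * b * R + 1
  have hδ : 0 ≤ (3 + 6 * s) / √L + 5 * s ^ 2 / L := by positivity
  have hR1 : 1 ≤ R := one_le_sqrt.2 (by linarith)
  have hR : R ^ 2 = 1 + (3 + 6 * s) / √L + 5 * s ^ 2 / L := sq_sqrt (by linarith)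
  suffices htail : Pr q {x : Fin m → U | B < ∑ j, W (x j)} ≤ exp (-s ^ 2 / 4) by
    have := Pr_add_Pr_compl hq1 {x : Fin m → U | ∑ j, W (x j) ≤ B}
    simp only [Set.compl_ofPred, not_le] at this
    linarith
  rcases le_or_gt 1 (b * R) with hbR | hbR
  · have hempty : {x : Fin m → U | B < ∑ j, W (x j)} = ∅ := by
      refine Set.eq_empty_of_forall_notMem fun x (hx : B < ∑ j, W (x j)) => ?_
      have hsum : ∑ j, W (x j) ≤ m * a := by
        simpa using sum_le_sum fun j (_ : j ∈ univ) => hWa (x j)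
      have : (m : ℝ) * a ≤ m * a * (b * R) := le_mul_of_one_le_right (by positivity) hbR
      linarith
    rw [hempty]
    simpa [Pr] using (exp_pos _).le
  · have hb0 : 0 < b := hb.lt_of_ne (by rintro rfl; simp at hmb; linarith)
    have hM : L * R ≤ m * b := by nlinarith
    obtain ⟨ν, hν, hgain⟩ := exists_le_mul_chernoff_exponent hs hL hR1 hR hM
    calc Pr q {x : Fin m → U | B < ∑ j, W (x j)} ≤ exp (m * b * (exp ν - 1) - ν * B / a) :=
          Pr_lt_sum_le_exp hq0 hq1 ha hW0 hWa hmean hν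
      _ ≤ exp (-s ^ 2 / 4) := by
          gcongr
          have hB : ν * B / a = m * b * (ν * R) + ν / a := by
            simp only [B]
            field_simp
          rw [hB]
          nlinarith [div_nonneg hν ha.le]

theorem one_le_card_mul_sum_sq {n : ℕ} {f : Fin n → ℝ} (hf : ∑ i, f i = 1) :
    1 ≤ n * ∑ i, f i ^ 2 := by
  simpa [hf] using sq_sum_le_card_mul_sum_sq (s := univ) (f := f)

theorem average_search_time_bound_general
    {U : Type*} [Fintype U]
    (n : ℕ)
    (q : U → ℝ) (hq0 : ∀ u, 0 ≤ q u) (hq1 : ∑ u, q u = 1)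
    (h : U → Fin n)
    (p : Fin n → ℝ)
    (hp : ∀ i, p i = ∑ u ∈ Finset.univ.filter (fun u => h u = i), q u)
    (v : Fin n → ℝ) (hv0 : ∀ i, 0 ≤ v i)
    (hvsum : ∑ i, v i = 1)
    (m : ℕ)
    (s L : ℝ) (hs : 0 < s) (hL : 9 < L) (hmn : (m : ℝ) = L * n)
    (AST : (Fin m → U) → ℝ)
    (hAST : ∀ x : Fin m → U, AST x ≤ ∑ i : Fin n, v i * (kcount h x i : ℝ)) :
    (1 - (10 / 9) * Real.exp (-s ^ 2 / 4)
      ≤ Pr q {x : Fin m → U |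
          ∑ i : Fin n, v i * (kcount h x i : ℝ)
            ≤ L * n * Real.sqrt (∑ i : Fin n, v i ^ 2)
                * Real.sqrt (∑ i : Fin n, p i ^ 2)
                * Real.sqrt (1 + (3 + 6 * s) / Real.sqrt L + 5 * s ^ 2 / L) + 1})
    ∧ (1 - (10 / 9) * Real.exp (-s ^ 2 / 4)
      ≤ Pr q {x : Fin m → U |
          AST x
            ≤ L * n * Real.sqrt (∑ i : Fin n, v i ^ 2)
                * Real.sqrt (∑ i : Fin n, p i ^ 2)
                * Real.sqrt (1 + (3 + 6 * s) / Real.sqrt L + 5 * s ^ 2 / L) + 1}) := by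
  set a := √(∑ i : Fin n, v i ^ 2)
  set b := √(∑ i : Fin n, p i ^ 2)
  have hpsum : ∑ i, p i = 1 := by simpa [hq1] using (sum_mul_comp_eq_sum_mul h hp fun _ => 1).symm
  have ha : 0 < a := sqrt_pos.2 <| pos_of_mul_pos_right
    (one_pos.trans_le (one_le_card_mul_sum_sq hvsum)) (Nat.cast_nonneg n)
  have hva : ∀ i, v i ≤ a := fun i =>
    (le_sqrt (hv0 i) (sum_nonneg fun j _ => sq_nonneg (v j))).2
      (single_le_sum (f := fun j => v j ^ 2) (fun j _ => sq_nonneg (v j)) (mem_univ i))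
  have hmean : ∑ u, q u * v (h u) ≤ a * b := by
    rw [sum_mul_comp_eq_sum_mul h hp, mul_comm a]
    exact sum_mul_le_sqrt_mul_sqrt univ p v
  have hmb : L ≤ m * b ^ 2 := by
    rw [sq_sqrt (sum_nonneg fun i _ => sq_nonneg (p i)), hmn, mul_assoc]
    exact le_mul_of_one_le_right (by linarith) (one_le_card_mul_sum_sq hpsum)
  have key := one_sub_exp_le_Pr_sum_le (m := m) hq0 hq1 ha (fun u => hv0 (h u))
    (fun u => hva (h u)) hmean (sqrt_nonneg _) hmb hs.le (by linarith)
  simp only [← sum_mul_kcount, hmn] at key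
  have hE : 1 - 10 / 9 * exp (-s ^ 2 / 4) ≤ 1 - exp (-s ^ 2 / 4) := by
    linarith [exp_pos (-s ^ 2 / 4)]
  have main := hE.trans key
  exact ⟨main, main.trans (Pr_mono hq0 fun x hx => (hAST x).trans hx)⟩

/-- Corollary 8 of the paper: For all `n > 24`, `s > 0`, `L > 9`, and
`m = L n`, with probability at least `1 − (10/9) e^(−s²/4)` over the inserted key
sequence `x`, one has `∑ i, v i · k_i(x) ≤ L n ‖v‖ ‖p‖ √(1 + (3+6s)/√L + 5s²/L) + 1`;
in particular the same probabilistic upper bound holds for any `AST` (average search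
time) function satisfying `AST x ≤ ∑ i, v i · k_i(x)`. -/
theorem average_search_time_bound
    {U : Type*} [Fintype U] [Nonempty U]
    (n : ℕ) (hn : 24 < n)
    (q : U → ℝ) (hq0 : ∀ u, 0 ≤ q u) (hq1 : ∑ u, q u = 1)
    (h : U → Fin n)
    (p : Fin n → ℝ)
    (hp : ∀ i, p i = ∑ u ∈ Finset.univ.filter (fun u => h u = i), q u)
    (v : Fin n → ℝ) (hv0 : ∀ i, 0 ≤ v i) (hv1 : ∀ i, v i ≤ 1)
    (hvsum : ∑ i, v i = 1)
    (m : ℕ) (hm : 2 ≤ m)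
    (s L : ℝ) (hs : 0 < s) (hL : 9 < L) (hmn : (m : ℝ) = L * n)
    (AST : (Fin m → U) → ℝ)
    (hAST : ∀ x : Fin m → U, AST x ≤ ∑ i : Fin n, v i * (kcount h x i : ℝ)) :
    (1 - (10 / 9) * Real.exp (-s ^ 2 / 4)
      ≤ Pr q {x : Fin m → U |
          ∑ i : Fin n, v i * (kcount h x i : ℝ)
            ≤ L * n * Real.sqrt (∑ i : Fin n, v i ^ 2)
                * Real.sqrt (∑ i : Fin n, p i ^ 2)
                * Real.sqrt (1 + (3 + 6 * s) / Real.sqrt L + 5 * s ^ 2 / L) + 1})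
    ∧ (1 - (10 / 9) * Real.exp (-s ^ 2 / 4)
      ≤ Pr q {x : Fin m → U |
          AST x
            ≤ L * n * Real.sqrt (∑ i : Fin n, v i ^ 2)
                * Real.sqrt (∑ i : Fin n, p i ^ 2)
                * Real.sqrt (1 + (3 + 6 * s) / Real.sqrt L + 5 * s ^ 2 / L) + 1}) :=
  average_search_time_bound_general n q hq0 hq1 h p hp v hv0 hvsum m s L hs hL hmn AST hAST
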